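/- Let q ≥ 2, let (P, L) be a finite projective plane of order q, let B be a projective bundle, and let ℓ ∈ L be a line. Then for every point R ∈ ℓ there is exactly one oval o ∈ B with o ∩ ℓ = {R}; consequently ℓ has exactly q+1 tangent ovals in B, one at each of its points. -/

import Mathlib

/-! Counting incidences and pairs of incident ovals gives `∑ r p = n (q + 1)` and
`∑ (r p)² = n (q + 1)²`, where `r p` is the number of ovals of the bundle through `p` and the
sum runs over the `n = q² + q + 1` points; so the `r p` have zero variance and all equal
`q + 1`. For `R ∈ ℓ`, the `q + 1` ovals through `R` then cover every other point exactly once,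
hence partition the `q` points of `ℓ \ {R}`. An oval meets `ℓ` in at most two points, so each
of them takes at most one of these, and exactly one takes none: the oval tangent to `ℓ` at `R`. -/

/-- A finite projective plane of order `q`, given by its set of lines (each line a
finite set of points of the ambient point type `P`): any two distinct points lie on
exactly one common line, any two distinct lines meet in exactly one point, there are
four points no three of which are collinear, and every line has `q + 1` points. -/
structure IsProjectivePlane (q : ℕ) {P : Type} [DecidableEq P] (L : Finset (Finset P)) : Prop where
  exists_unique_line : ∀ p₁ p₂ : P, p₁ ≠ p₂ → ∃! ℓ, ℓ ∈ L ∧ p₁ ∈ ℓ ∧ p₂ ∈ ℓ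
  exists_unique_point : ∀ ℓ₁ ∈ L, ∀ ℓ₂ ∈ L, ℓ₁ ≠ ℓ₂ → ∃! p, p ∈ ℓ₁ ∧ p ∈ ℓ₂
  nondeg : ∃ a b c d : P, a ≠ b ∧ a ≠ c ∧ a ≠ d ∧ b ≠ c ∧ b ≠ d ∧ c ≠ d ∧
      ∀ ℓ ∈ L, (ℓ ∩ ({a, b, c, d} : Finset P)).card ≤ 2
  card_line : ∀ ℓ ∈ L, ℓ.card = q + 1

/-- An oval: a set of `q + 1` points such that every line contains at most two of them. -/
def IsOval (q : ℕ) {P : Type} [DecidableEq P] (L : Finset (Finset P)) (O : Finset P) : Prop :=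
  O.card = q + 1 ∧ ∀ ℓ ∈ L, (ℓ ∩ O).card ≤ 2

/-- A projective bundle: a set of `q² + q + 1` ovals, any two of which meet in
exactly one point. -/
def IsProjectiveBundle (q : ℕ) {P : Type} [DecidableEq P] (L : Finset (Finset P))
    (B : Finset (Finset P)) : Prop :=
  B.card = q ^ 2 + q + 1 ∧ (∀ o ∈ B, IsOval q L o) ∧
    ∀ o₁ ∈ B, ∀ o₂ ∈ B, o₁ ≠ o₂ → (o₁ ∩ o₂).card = 1

open Finset

section Incidence
variable {α ι : Type*} [DecidableEq α]

def IsPartialLinearSpace (F : Finset (Finset α)) : Prop :=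
  ∀ s ∈ F, ∀ t ∈ F, ∀ x y, x ≠ y → x ∈ s → y ∈ s → x ∈ t → y ∈ t → s = t

lemma IsPartialLinearSpace.pairwiseDisjoint_erase {F : Finset (Finset α)}
    (hF : IsPartialLinearSpace F) (p : α) :
    (({s ∈ F | p ∈ s} : Finset (Finset α)) : Set (Finset α)).PairwiseDisjoint (·.erase p) := by
  intro s hs t ht hst
  rw [mem_coe, mem_filter] at hs ht
  rw [Function.onFun, disjoint_left]
  intro x hxs hxt
  exact hst (hF s hs.1 t ht.1 p x (ne_of_mem_erase hxs).symm hs.2 (mem_of_mem_erase hxs) ht.2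
    (mem_of_mem_erase hxt))

lemma IsPartialLinearSpace.card_biUnion_erase {F : Finset (Finset α)} {k : ℕ}
    (hF : IsPartialLinearSpace F) (hcard : ∀ s ∈ F, #s = k + 1) (p : α) :
    #({s ∈ F | p ∈ s}.biUnion (·.erase p)) = #{s ∈ F | p ∈ s} * k := by
  rw [card_biUnion (hF.pairwiseDisjoint_erase p), ← smul_eq_mul, ← sum_const]
  refine sum_congr rfl fun s hs => ?_
  rw [mem_filter] at hs
  rw [card_erase_of_mem hs.2, hcard s hs.1, Nat.add_sub_cancel]

lemma card_filter_eq_empty_add_card_biUnion {s : Finset ι} {f : ι → Finset α}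
    (hs : (s : Set ι).PairwiseDisjoint f) (hf : ∀ i ∈ s, #(f i) ≤ 1) :
    #{i ∈ s | f i = ∅} + #(s.biUnion f) = #s := by
  rw [card_biUnion hs, card_filter, ← sum_add_distrib, card_eq_sum_ones s]
  refine sum_congr rfl fun i hi => ?_
  by_cases h : f i = ∅
  · simp [h]
  · have := card_pos.2 (nonempty_iff_ne_empty.2 h)
    have := hf i hi
    simp only [h, if_false]
    omega

lemma sum_card_filter_mem [Fintype α] (t : Finset ι) (f : ι → Finset α) :
    ∑ a, #{i ∈ t | a ∈ f i} = ∑ i ∈ t, #(f i) := by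
  simp only [card_filter]
  rw [sum_comm]
  exact sum_congr rfl fun i _ => by rw [← card_filter, filter_mem_eq_inter, univ_inter]

lemma card_filter_card_inter_eq_one (B : Finset (Finset α)) (ℓ : Finset α) :
    #{o ∈ B | #(o ∩ ℓ) = 1} = ∑ R ∈ ℓ, #{o ∈ B | o ∩ ℓ = {R}} := by
  rw [← card_biUnion]
  · congr 1
    ext o
    simp only [mem_filter, mem_biUnion, card_eq_one]
    constructor
    · rintro ⟨hoB, R, hR⟩
      exact ⟨R, inter_subset_right (hR ▸ mem_singleton_self R), hoB, hR⟩
    · rintro ⟨R, -, hoB, hR⟩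
      exact ⟨hoB, R, hR⟩
  · intro R _ S _ hRS
    rw [Function.onFun, disjoint_left]
    intro o hoR hoS
    exact hRS (singleton_injective ((mem_filter.1 hoR).2.symm.trans (mem_filter.1 hoS).2))

lemma Nat.eq_of_sum_eq_mul_of_sum_sq_eq_mul (s : Finset ι) (r : ι → ℕ) (c : ℕ)
    (h₁ : ∑ i ∈ s, r i = #s * c) (h₂ : ∑ i ∈ s, r i ^ 2 = #s * c ^ 2) {i : ι} (hi : i ∈ s) :
    r i = c := by
  have hzero : ∑ j ∈ s, ((r j : ℤ) - c) ^ 2 = 0 := by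
    simp only [sub_sq, sum_add_distrib, sum_sub_distrib, ← sum_mul, ← mul_sum, sum_const,
      nsmul_eq_mul]
    have h₁' : ∑ j ∈ s, (r j : ℤ) = #s * c := by exact_mod_cast h₁
    have h₂' : ∑ j ∈ s, (r j : ℤ) ^ 2 = #s * c ^ 2 := by exact_mod_cast h₂
    rw [h₁', h₂']
    ring
  have := (sum_eq_zero_iff_of_nonneg fun j _ => sq_nonneg ((r j : ℤ) - c)).1 hzero i hi
  have := pow_eq_zero_iff (n := 2) (by norm_num) |>.1 this
  omega

end Incidence

namespace IsProjectivePlane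
variable {q : ℕ} {P : Type} [DecidableEq P] {L : Finset (Finset P)}

lemma isPartialLinearSpace (hL : IsProjectivePlane q L) : IsPartialLinearSpace L := by
  intro m₁ h₁ m₂ h₂ x y hxy hx₁ hy₁ hx₂ hy₂
  obtain ⟨m, -, hm⟩ := hL.exists_unique_line x y hxy
  rw [hm m₁ ⟨h₁, hx₁, hy₁⟩, hm m₂ ⟨h₂, hx₂, hy₂⟩]

lemma card_inter_eq_one (hL : IsProjectivePlane q L) {m₁ m₂ : Finset P} (h₁ : m₁ ∈ L)
    (h₂ : m₂ ∈ L) (hne : m₁ ≠ m₂) : #(m₁ ∩ m₂) = 1 := by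
  obtain ⟨x, hx, hu⟩ := hL.exists_unique_point m₁ h₁ m₂ h₂ hne
  exact card_eq_one.2 ⟨x, eq_singleton_iff_unique_mem.2 ⟨mem_inter.2 hx,
    fun y hy => hu y (mem_inter.1 hy)⟩⟩

lemma biUnion_erase_filter_mem (hL : IsProjectivePlane q L) [Fintype P] (p : P) :
    {m ∈ L | p ∈ m}.biUnion (·.erase p) = univ.erase p := by
  ext x
  simp only [mem_biUnion, mem_filter, mem_erase, mem_univ, and_true]
  refine ⟨fun ⟨_, _, hxp, _⟩ => hxp, fun hxp => ?_⟩
  obtain ⟨m, ⟨hm, hpm, hxm⟩, -⟩ := hL.exists_unique_line p x (Ne.symm hxp)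
  exact ⟨m, ⟨hm, hpm⟩, hxp, hxm⟩

/-- Projecting from `p` puts the lines through `p` in bijection with the points of `ℓ₀`. -/
lemma card_filter_mem (hL : IsProjectivePlane q L) {ℓ₀ : Finset P} (hℓ₀ : ℓ₀ ∈ L) {p : P}
    (hp : p ∉ ℓ₀) : #{m ∈ L | p ∈ m} = q + 1 := by
  have hdisj : (({m ∈ L | p ∈ m} : Finset (Finset P)) : Set (Finset P)).PairwiseDisjoint
      (· ∩ ℓ₀) :=
    hL.isPartialLinearSpace.pairwiseDisjoint_erase p |>.mono_on fun m _ =>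
      fun x hx => mem_erase.2 ⟨fun h => hp (h ▸ (mem_inter.1 hx).2), (mem_inter.1 hx).1⟩
  have hcover : {m ∈ L | p ∈ m}.biUnion (· ∩ ℓ₀) = ℓ₀ := by
    refine (biUnion_subset.2 fun m _ => inter_subset_right).antisymm fun x hx => ?_
    obtain ⟨m, ⟨hm, hpm, hxm⟩, -⟩ := hL.exists_unique_line p x (fun h => hp (h ▸ hx))
    exact mem_biUnion.2 ⟨m, mem_filter.2 ⟨hm, hpm⟩, mem_inter.2 ⟨hxm, hx⟩⟩
  rw [← hL.card_line ℓ₀ hℓ₀, ← hcover, card_biUnion hdisj, card_eq_sum_ones]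
  refine sum_congr rfl fun m hm => ?_
  rw [mem_filter] at hm
  exact (hL.card_inter_eq_one hm.1 hℓ₀ fun h => hp (h ▸ hm.2)).symm

lemma exists_not_mem (hL : IsProjectivePlane q L) : ∃ ℓ₀ ∈ L, ∃ p, p ∉ ℓ₀ := by
  obtain ⟨a, b, c, d, hab, hac, had, hbc, hbd, hcd, hquad⟩ := hL.nondeg
  obtain ⟨ℓ₀, ⟨hℓ₀, -⟩, -⟩ := hL.exists_unique_line a b hab
  refine ⟨ℓ₀, hℓ₀, ?_⟩
  by_contra! hall
  have h4 : #({a, b, c, d} : Finset P) = 4 := by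
    rw [card_insert_of_notMem (by simp [hab, hac, had]), card_insert_of_notMem (by simp [hbc, hbd]),
      card_pair hcd]
  have := hquad ℓ₀ hℓ₀
  rw [inter_eq_right.2 fun x _ => hall x, h4] at this
  omega

lemma card_points (hL : IsProjectivePlane q L) [Fintype P] :
    Fintype.card P = q ^ 2 + q + 1 := by
  obtain ⟨ℓ₀, hℓ₀, p, hp⟩ := hL.exists_not_mem
  have := hL.isPartialLinearSpace.card_biUnion_erase hL.card_line p
  rw [hL.biUnion_erase_filter_mem, hL.card_filter_mem hℓ₀ hp, card_erase_of_mem (mem_univ p),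
    card_univ] at this
  have : 0 < Fintype.card P := Fintype.card_pos_iff.2 ⟨p⟩
  have : (q + 1) * q = q ^ 2 + q := by ring
  omega

end IsProjectivePlane

namespace IsProjectiveBundle
variable {q : ℕ} {P : Type} [DecidableEq P] {L B : Finset (Finset P)}

lemma card_oval (hB : IsProjectiveBundle q L B) {o : Finset P} (ho : o ∈ B) : #o = q + 1 :=
  (hB.2.1 o ho).1

lemma isPartialLinearSpace (hB : IsProjectiveBundle q L B) : IsPartialLinearSpace B := by
  intro o₁ h₁ o₂ h₂ x y hxy hx₁ hy₁ hx₂ hy₂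
  by_contra hne
  have := hB.2.2 o₁ h₁ o₂ h₂ hne
  have : 1 < #(o₁ ∩ o₂) :=
    one_lt_card.2 ⟨x, mem_inter.2 ⟨hx₁, hx₂⟩, y, mem_inter.2 ⟨hy₁, hy₂⟩, hxy⟩
  omega

lemma sum_card_inter (hB : IsProjectiveBundle q L B) :
    ∑ x ∈ B ×ˢ B, #(x.1 ∩ x.2) = #B * (q + 1) ^ 2 := by
  rw [sum_product, ← smul_eq_mul, ← sum_const]
  refine sum_congr rfl fun o ho => ?_
  rw [← add_sum_erase B _ ho, inter_self, hB.card_oval ho,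
    sum_congr rfl fun o' ho' => hB.2.2 o ho o' (mem_of_mem_erase ho') (ne_of_mem_erase ho').symm,
    sum_const, card_erase_of_mem ho, hB.1, smul_eq_mul, mul_one, Nat.add_sub_cancel]
  ring

lemma card_filter_mem (hB : IsProjectiveBundle q L B) (hL : IsProjectivePlane q L) [Fintype P]
    (p : P) : #{o ∈ B | p ∈ o} = q + 1 := by
  have hcard : #(univ : Finset P) = #B := by rw [card_univ, hL.card_points, hB.1]
  refine Nat.eq_of_sum_eq_mul_of_sum_sq_eq_mul univ (fun p => #{o ∈ B | p ∈ o}) (q + 1) ?_ ?_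
    (mem_univ p)
  · rw [sum_card_filter_mem B fun o => o, hcard, ← smul_eq_mul, ← sum_const]
    exact sum_congr rfl fun o ho => hB.card_oval ho
  · have hsq (a : P) : #{o ∈ B | a ∈ o} ^ 2 = #{x ∈ B ×ˢ B | a ∈ x.1 ∩ x.2} := by
      simp only [sq, ← card_product, ← filter_product, mem_inter]
    simp only [hsq]
    rw [sum_card_filter_mem (B ×ˢ B) fun x => x.1 ∩ x.2, hcard, hB.sum_card_inter]

lemma biUnion_erase_filter_mem (hB : IsProjectiveBundle q L B) (hL : IsProjectivePlane q L)
    [Fintype P] (R : P) : {o ∈ B | R ∈ o}.biUnion (·.erase R) = univ.erase R := by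
  refine eq_of_subset_of_card_le (fun x hx => ?_) ?_
  · obtain ⟨o, -, hxo⟩ := mem_biUnion.1 hx
    exact mem_erase.2 ⟨ne_of_mem_erase hxo, mem_univ x⟩
  · rw [hB.isPartialLinearSpace.card_biUnion_erase (fun o ho => hB.card_oval ho),
      hB.card_filter_mem hL, card_erase_of_mem (mem_univ R), card_univ, hL.card_points,
      Nat.add_sub_cancel]
    exact le_of_eq (by ring)

lemma card_filter_inter_eq_singleton (hB : IsProjectiveBundle q L B) (hL : IsProjectivePlane q L)
    [Fintype P] {ℓ : Finset P} (hℓ : ℓ ∈ L) {R : P} (hR : R ∈ ℓ) :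
    #{o ∈ B | o ∩ ℓ = {R}} = 1 := by
  have hdisj : (({o ∈ B | R ∈ o} : Finset (Finset P)) : Set (Finset P)).PairwiseDisjoint
      fun o => (o ∩ ℓ).erase R :=
    hB.isPartialLinearSpace.pairwiseDisjoint_erase R |>.mono_on fun o _ =>
      erase_subset_erase R inter_subset_left
  have hle : ∀ o ∈ {o ∈ B | R ∈ o}, #((o ∩ ℓ).erase R) ≤ 1 := by
    intro o ho
    rw [mem_filter] at ho
    have := (hB.2.1 o ho.1).2 ℓ hℓ
    rw [card_erase_of_mem (mem_inter.2 ⟨ho.2, hR⟩), inter_comm]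
    omega
  have hcover : {o ∈ B | R ∈ o}.biUnion (fun o => (o ∩ ℓ).erase R) = ℓ.erase R := by
    refine (biUnion_subset.2 fun o _ => erase_subset_erase R inter_subset_right).antisymm
      fun S hS => ?_
    have : S ∈ univ.erase R := mem_erase.2 ⟨ne_of_mem_erase hS, mem_univ S⟩
    rw [← hB.biUnion_erase_filter_mem hL] at this
    obtain ⟨o, ho, hSo⟩ := mem_biUnion.1 this
    exact mem_biUnion.2 ⟨o, ho, mem_erase.2 ⟨ne_of_mem_erase hSo,
      mem_inter.2 ⟨mem_of_mem_erase hSo, mem_of_mem_erase hS⟩⟩⟩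
  have htangent :
      {o ∈ {o ∈ B | R ∈ o} | (o ∩ ℓ).erase R = ∅} = {o ∈ B | o ∩ ℓ = {R}} := by
    rw [filter_filter]
    refine filter_congr fun o _ => ?_
    rw [erase_eq_empty_iff]
    constructor
    · rintro ⟨hRo, h | h⟩
      · exact absurd (h ▸ mem_inter.2 ⟨hRo, hR⟩) (notMem_empty R)
      · exact h
    · intro h
      exact ⟨(mem_inter.1 (h ▸ mem_singleton_self R)).1, Or.inr h⟩
  have := card_filter_eq_empty_add_card_biUnion hdisj hle
  rw [htangent, hcover, hB.card_filter_mem hL, card_erase_of_mem hR, hL.card_line ℓ hℓ] at this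
  omega

end IsProjectiveBundle

theorem statement_8_general (q : ℕ) (P : Type) [Fintype P] [DecidableEq P]
    (L : Finset (Finset P)) (hL : IsProjectivePlane q L)
    (B : Finset (Finset P)) (hB : IsProjectiveBundle q L B)
    (ℓ : Finset P) (hℓ : ℓ ∈ L) :
    (∀ R ∈ ℓ, ∃! o, o ∈ B ∧ o ∩ ℓ = {R}) ∧
    (B.filter fun o => (o ∩ ℓ).card = 1).card = q + 1 := by
  have htangent (R : P) (hR : R ∈ ℓ) := hB.card_filter_inter_eq_singleton hL hℓ hR
  refine ⟨fun R hR => ?_, ?_⟩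
  · simpa only [mem_filter] using card_eq_one_iff_existsUnique.1 (htangent R hR)
  · rw [card_filter_card_inter_eq_one, sum_congr rfl htangent, sum_const, smul_eq_mul, mul_one,
      hL.card_line ℓ hℓ]

/-- Given a projective bundle `B` in a finite projective plane of order `q ≥ 2`
and a line `ℓ`, for every point `R` of `ℓ` there is exactly one oval of `B` meeting `ℓ`
exactly in `R`; consequently `ℓ` has exactly `q + 1` tangent ovals in `B`, one at each of
its points. -/
theorem statement_8 (q : ℕ) (hq : 2 ≤ q) (P : Type) [Fintype P] [DecidableEq P]
    (L : Finset (Finset P)) (hL : IsProjectivePlane q L)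
    (B : Finset (Finset P)) (hB : IsProjectiveBundle q L B)
    (ℓ : Finset P) (hℓ : ℓ ∈ L) :
    (∀ R ∈ ℓ, ∃! o, o ∈ B ∧ o ∩ ℓ = {R}) ∧
    (B.filter fun o => (o ∩ ℓ).card = 1).card = q + 1 :=
  statement_8_general q P L hL B hB ℓ hℓ
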